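/- (Appendix B, term (e).) On a probability space, let x₀ be a square-integrable ℝ^n-valued random vector and (η_l)_{l≥1} ℝ^n-valued square-integrable random vectors with E[η_l] = 0 and Cov(η_l) = I_n, with x₀, η₁, η₂, … mutually independent. Let A, β be deterministic n×n real matrices, (u_l)_{l≥1} deterministic vectors in ℝ^n, and define x_s = u_s + A x_{s−1} + β η_s for s ≥ 1. Let 0 ≤ h < t and let M_1, …, M_t and N_1, …, N_{t−h} be deterministic n×n real matrices. Then Cov(Σ_{l=1}^{t} M_l x_{l−1}, Σ_{k=1}^{t−h} N_k η_k) = Σ_{k=1}^{t−h} (Σ_{l=k+1}^{t} M_l A^{l−1−k} β) N_kᵀ, where inner empty sums are zero. -/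

import Mathlib

/-!
Covariance is bilinear, so the left side expands into `Σ_l Σ_k M_l Cov(x_{l-1}, η_k) N_kᵀ`.
The recursion gives `Cov(x_{s+1}, η_k) = A Cov(x_s, η_k) + β Cov(η_{s+1}, η_k)`, and by
independence and `Cov(η_k) = I` the last factor is `I` if `k = s + 1` and `0` otherwise; since
also `Cov(x₀, η_k) = 0`, induction gives `Cov(x_s, η_k) = A^{s-k} β` for `k ≤ s` and `0` for
`k > s`. The indicator `k ≤ l - 1` then restricts the inner sum to `l ≥ k + 1`.
-/

open Matrix MeasureTheory ProbabilityTheory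

noncomputable def covMatrix {Ω : Type*} [MeasureSpace Ω] {a b : ℕ}
    (X : Ω → Fin a → ℝ) (Y : Ω → Fin b → ℝ) : Matrix (Fin a) (Fin b) ℝ :=
  Matrix.of fun i j => ∫ ω, (X ω i - ∫ ω', X ω' i) * (Y ω j - ∫ ω', Y ω' j)

open Finset

section CovMatrix

variable {Ω : Type*} [MeasureSpace Ω] {a b c : ℕ}

lemma MeasureTheory.MemLp.mulVec {X : Ω → Fin a → ℝ} (hX : MemLp X 2 ℙ)
    (M : Matrix (Fin c) (Fin a) ℝ) : MemLp (fun ω => M *ᵥ X ω) 2 ℙ :=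
  (LinearMap.toContinuousLinearMap (mulVecLin M)).comp_memLp' hX

lemma covMatrix_apply (X : Ω → Fin a → ℝ) (Y : Ω → Fin b → ℝ) (i : Fin a) (j : Fin b) :
    covMatrix X Y i j = cov[fun ω => X ω i, fun ω => Y ω j; ℙ] :=
  rfl

lemma covMatrix_add_left [IsFiniteMeasure (ℙ : Measure Ω)] {X₁ X₂ : Ω → Fin a → ℝ}
    {Y : Ω → Fin b → ℝ} (hX₁ : MemLp X₁ 2 ℙ) (hX₂ : MemLp X₂ 2 ℙ) (hY : MemLp Y 2 ℙ) :
    covMatrix (fun ω => X₁ ω + X₂ ω) Y = covMatrix X₁ Y + covMatrix X₂ Y := by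
  ext i j
  exact covariance_add_left (hX₁.eval i) (hX₂.eval i) (hY.eval j)

lemma covMatrix_const_add_left [IsProbabilityMeasure (ℙ : Measure Ω)] (v : Fin a → ℝ)
    {X : Ω → Fin a → ℝ} (Y : Ω → Fin b → ℝ) (hX : Integrable X ℙ) :
    covMatrix (fun ω => v + X ω) Y = covMatrix X Y := by
  ext i j
  exact covariance_const_add_left (hX.eval i) (v i)

lemma covMatrix_mulVec_left [IsFiniteMeasure (ℙ : Measure Ω)] (M : Matrix (Fin c) (Fin a) ℝ)
    {X : Ω → Fin a → ℝ} {Y : Ω → Fin b → ℝ} (hX : MemLp X 2 ℙ) (hY : MemLp Y 2 ℙ) :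
    covMatrix (fun ω => M *ᵥ X ω) Y = M * covMatrix X Y := by
  ext i j
  simp only [covMatrix_apply, mulVec, dotProduct, mul_apply]
  rw [covariance_fun_sum_left (fun r => (hX.eval r).const_mul (M i r)) (hY.eval j)]
  simp only [covariance_const_mul_left]

lemma covMatrix_mulVec_right [IsFiniteMeasure (ℙ : Measure Ω)] (N : Matrix (Fin c) (Fin b) ℝ)
    {X : Ω → Fin a → ℝ} {Y : Ω → Fin b → ℝ} (hX : MemLp X 2 ℙ) (hY : MemLp Y 2 ℙ) :
    covMatrix X (fun ω => N *ᵥ Y ω) = covMatrix X Y * Nᵀ := by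
  ext i j
  simp only [covMatrix_apply, mulVec, dotProduct, mul_apply, transpose_apply]
  rw [covariance_fun_sum_right (fun r => (hY.eval r).const_mul (N j r)) (hX.eval i)]
  simp only [covariance_const_mul_right, mul_comm]

lemma covMatrix_sum_left [IsFiniteMeasure (ℙ : Measure Ω)] {ι : Type*} (s : Finset ι)
    {X : ι → Ω → Fin a → ℝ} {Y : Ω → Fin b → ℝ} (hX : ∀ l ∈ s, MemLp (X l) 2 ℙ)
    (hY : MemLp Y 2 ℙ) :
    covMatrix (fun ω => ∑ l ∈ s, X l ω) Y = ∑ l ∈ s, covMatrix (X l) Y := by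
  ext i j
  simp only [covMatrix_apply, Matrix.sum_apply, Finset.sum_apply]
  exact covariance_fun_sum_left' (fun l hl => (hX l hl).eval i) (hY.eval j)

lemma covMatrix_sum_right [IsFiniteMeasure (ℙ : Measure Ω)] {ι : Type*} (s : Finset ι)
    {X : Ω → Fin a → ℝ} {Y : ι → Ω → Fin b → ℝ} (hX : MemLp X 2 ℙ)
    (hY : ∀ k ∈ s, MemLp (Y k) 2 ℙ) :
    covMatrix X (fun ω => ∑ k ∈ s, Y k ω) = ∑ k ∈ s, covMatrix X (Y k) := by
  ext i j
  simp only [covMatrix_apply, Matrix.sum_apply, Finset.sum_apply]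
  exact covariance_fun_sum_right' (fun k hk => (hY k hk).eval j) (hX.eval i)

lemma covMatrix_eq_zero_of_indepFun {X : Ω → Fin a → ℝ} {Y : Ω → Fin b → ℝ}
    (h : IndepFun X Y ℙ) (hX : MemLp X 2 ℙ) (hY : MemLp Y 2 ℙ) : covMatrix X Y = 0 := by
  ext i j
  exact (h.comp (measurable_pi_apply i) (measurable_pi_apply j)).covariance_eq_zero
    (hX.eval i) (hY.eval j)

lemma covMatrix_sum_mulVec_sum_mulVec [IsFiniteMeasure (ℙ : Measure Ω)] {d : ℕ} {ι κ : Type*}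
    (s : Finset ι) (s' : Finset κ) (M : ι → Matrix (Fin c) (Fin a) ℝ)
    (N : κ → Matrix (Fin d) (Fin b) ℝ) {X : ι → Ω → Fin a → ℝ} {Y : κ → Ω → Fin b → ℝ}
    (hX : ∀ l ∈ s, MemLp (X l) 2 ℙ) (hY : ∀ k ∈ s', MemLp (Y k) 2 ℙ) :
    covMatrix (fun ω => ∑ l ∈ s, M l *ᵥ X l ω) (fun ω => ∑ k ∈ s', N k *ᵥ Y k ω) =
      ∑ l ∈ s, ∑ k ∈ s', M l * covMatrix (X l) (Y k) * (N k)ᵀ := by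
  have hNY : MemLp (fun ω => ∑ k ∈ s', N k *ᵥ Y k ω) 2 ℙ :=
    memLp_finsetSum s' fun k hk => (hY k hk).mulVec (N k)
  rw [covMatrix_sum_left s (fun l hl => (hX l hl).mulVec (M l)) hNY]
  refine sum_congr rfl fun l hl => ?_
  rw [covMatrix_mulVec_left _ (hX l hl) hNY,
    covMatrix_sum_right s' (hX l hl) fun k hk => (hY k hk).mulVec (N k), Matrix.mul_sum]
  refine sum_congr rfl fun k hk => ?_
  rw [covMatrix_mulVec_right _ (hX l hl) (hY k hk), Matrix.mul_assoc]

end CovMatrix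

lemma Finset.sum_Icc_one_ite_le_sub_one {R : Type*} [AddCommMonoid R] (t k : ℕ) (f : ℕ → R) :
    ∑ l ∈ Icc 1 t, (if k ≤ l - 1 then f l else 0) = ∑ l ∈ Icc (k + 1) t, f l := by
  rw [← sum_filter]
  congr 1
  ext l
  simp only [mem_filter, mem_Icc]
  omega

section LinearStateSpaceModel

variable {Ω : Type*} [MeasureSpace Ω] {n : ℕ} {x₀ : Ω → Fin n → ℝ} {η : ℕ → Ω → Fin n → ℝ}
  {A β : Matrix (Fin n) (Fin n) ℝ} {u : ℕ → Fin n → ℝ} {x : ℕ → Ω → Fin n → ℝ}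

lemma memLp_state [IsFiniteMeasure (ℙ : Measure Ω)] (hx₀L2 : MemLp x₀ 2 ℙ)
    (hηL2 : ∀ l : ℕ, 1 ≤ l → MemLp (η l) 2 ℙ) (hx0 : x 0 = x₀)
    (hxrec : ∀ s : ℕ, ∀ ω, x (s + 1) ω = u (s + 1) + A *ᵥ x s ω + β *ᵥ η (s + 1) ω)
    (s : ℕ) : MemLp (x s) 2 ℙ := by
  induction s with
  | zero => rwa [hx0]
  | succ s ih =>
    rw [funext (hxrec s)]
    exact ((memLp_const (u (s + 1))).add (ih.mulVec A)).add
      ((hηL2 (s + 1) (Nat.le_add_left 1 s)).mulVec β)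

lemma indepFun_initial_noise (hindep : iIndepFun (fun l : ℕ => if l = 0 then x₀ else η l) ℙ)
    {k : ℕ} (hk : 1 ≤ k) : IndepFun x₀ (η k) ℙ := by
  simpa [Nat.one_le_iff_ne_zero.mp hk] using hindep.indepFun (Nat.one_le_iff_ne_zero.mp hk).symm

lemma indepFun_noise (hindep : iIndepFun (fun l : ℕ => if l = 0 then x₀ else η l) ℙ)
    {j k : ℕ} (hj : 1 ≤ j) (hk : 1 ≤ k) (hjk : j ≠ k) : IndepFun (η j) (η k) ℙ := by
  simpa [Nat.one_le_iff_ne_zero.mp hj, Nat.one_le_iff_ne_zero.mp hk] using hindep.indepFun hjk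

lemma covMatrix_noise_noise (hηL2 : ∀ l : ℕ, 1 ≤ l → MemLp (η l) 2 ℙ)
    (hηcov : ∀ l : ℕ, 1 ≤ l → covMatrix (η l) (η l) = 1)
    (hindep : iIndepFun (fun l : ℕ => if l = 0 then x₀ else η l) ℙ)
    {j k : ℕ} (hj : 1 ≤ j) (hk : 1 ≤ k) :
    covMatrix (η j) (η k) = if j = k then 1 else 0 := by
  split_ifs with hjk
  · subst hjk
    exact hηcov j hj
  · exact covMatrix_eq_zero_of_indepFun (indepFun_noise hindep hj hk hjk) (hηL2 j hj) (hηL2 k hk)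

lemma covMatrix_state_noise [IsProbabilityMeasure (ℙ : Measure Ω)] (hx₀L2 : MemLp x₀ 2 ℙ)
    (hηL2 : ∀ l : ℕ, 1 ≤ l → MemLp (η l) 2 ℙ)
    (hηcov : ∀ l : ℕ, 1 ≤ l → covMatrix (η l) (η l) = 1)
    (hindep : iIndepFun (fun l : ℕ => if l = 0 then x₀ else η l) ℙ) (hx0 : x 0 = x₀)
    (hxrec : ∀ s : ℕ, ∀ ω, x (s + 1) ω = u (s + 1) + A *ᵥ x s ω + β *ᵥ η (s + 1) ω)
    {k : ℕ} (hk : 1 ≤ k) (s : ℕ) :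
    covMatrix (x s) (η k) = if k ≤ s then A ^ (s - k) * β else 0 := by
  induction s with
  | zero =>
    rw [if_neg (by omega), hx0]
    exact covMatrix_eq_zero_of_indepFun (indepFun_initial_noise hindep hk) hx₀L2 (hηL2 k hk)
  | succ s ih =>
    have hs : 1 ≤ s + 1 := Nat.le_add_left 1 s
    have hxs := memLp_state hx₀L2 hηL2 hx0 hxrec s
    have hηs := hηL2 (s + 1) hs
    have hηk := hηL2 k hk
    rw [funext (hxrec s),
      covMatrix_add_left (X₁ := fun ω => u (s + 1) + A *ᵥ x s ω)
        ((memLp_const (u (s + 1))).add (hxs.mulVec A)) (hηs.mulVec β) hηk,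
      covMatrix_const_add_left _ _ ((hxs.mulVec A).integrable one_le_two),
      covMatrix_mulVec_left A hxs hηk, covMatrix_mulVec_left β hηs hηk, ih,
      covMatrix_noise_noise hηL2 hηcov hindep hs hk]
    rcases lt_trichotomy k (s + 1) with hlt | rfl | hgt
    · have hks : k ≤ s := Nat.le_of_lt_succ hlt
      rw [if_pos hks, if_pos hlt.le, if_neg hlt.ne', mul_zero, add_zero, ← Matrix.mul_assoc,
        ← pow_succ', Nat.sub_add_comm hks]
    · simp
    · rw [if_neg (by omega), if_neg hgt.ne, if_neg (by omega), mul_zero, mul_zero, add_zero]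

end LinearStateSpaceModel

theorem cov_state_noise_sums_general {Ω : Type*} [MeasureSpace Ω]
    [IsProbabilityMeasure (ℙ : Measure Ω)] {n : ℕ} {t h : ℕ}
    (x₀ : Ω → Fin n → ℝ) (η : ℕ → Ω → Fin n → ℝ)
    (hx₀L2 : MemLp x₀ 2 ℙ)
    (hηL2 : ∀ l : ℕ, 1 ≤ l → MemLp (η l) 2 ℙ)
    (hηcov : ∀ l : ℕ, 1 ≤ l → covMatrix (η l) (η l) = 1)
    -- x₀, η₁, η₂, … mutually independent
    (hindep : iIndepFun
      (fun l : ℕ => if l = 0 then x₀ else η l) ℙ)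
    (A β : Matrix (Fin n) (Fin n) ℝ) (u : ℕ → Fin n → ℝ)
    (x : ℕ → Ω → Fin n → ℝ)
    (hx0 : x 0 = x₀)
    (hxrec : ∀ s : ℕ, ∀ ω, x (s + 1) ω = u (s + 1) + A *ᵥ x s ω + β *ᵥ η (s + 1) ω)
    (M N : ℕ → Matrix (Fin n) (Fin n) ℝ) :
    covMatrix (fun ω => ∑ l ∈ Finset.Icc 1 t, M l *ᵥ x (l - 1) ω)
        (fun ω => ∑ k ∈ Finset.Icc 1 (t - h), N k *ᵥ η k ω) =
      ∑ k ∈ Finset.Icc 1 (t - h),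
        (∑ l ∈ Finset.Icc (k + 1) t, M l * A ^ (l - 1 - k) * β) * (N k)ᵀ := by
  rw [covMatrix_sum_mulVec_sum_mulVec _ _ M N
    (fun l _ => memLp_state hx₀L2 hηL2 hx0 hxrec (l - 1)) fun k hk => hηL2 k (mem_Icc.mp hk).1,
    sum_comm]
  refine sum_congr rfl fun k hk => ?_
  simp_rw [covMatrix_state_noise hx₀L2 hηL2 hηcov hindep hx0 hxrec (mem_Icc.mp hk).1, mul_ite,
    ite_mul, mul_zero, zero_mul, sum_Icc_one_ite_le_sub_one, sum_mul, mul_assoc]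

/-- Appendix B, term (e):
`Cov(Σ_{l=1}^t M_l x_{l-1}, Σ_{k=1}^{t-h} N_k η_k) = Σ_{k=1}^{t-h} (Σ_{l=k+1}^t M_l A^{l-1-k} β) N_kᵀ`. -/
theorem cov_state_noise_sums {Ω : Type*} [MeasureSpace Ω]
    [IsProbabilityMeasure (ℙ : Measure Ω)] {n : ℕ} {t h : ℕ} (hht : h < t)
    (x₀ : Ω → Fin n → ℝ) (η : ℕ → Ω → Fin n → ℝ)
    (hx₀L2 : MemLp x₀ 2 ℙ)
    (hηL2 : ∀ l : ℕ, 1 ≤ l → MemLp (η l) 2 ℙ)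
    (hηmean : ∀ l : ℕ, 1 ≤ l → ∀ i, (∫ ω, η l ω i) = 0)
    (hηcov : ∀ l : ℕ, 1 ≤ l → covMatrix (η l) (η l) = 1)
    -- x₀, η₁, η₂, … mutually independent
    (hindep : iIndepFun
      (fun l : ℕ => if l = 0 then x₀ else η l) ℙ)
    (A β : Matrix (Fin n) (Fin n) ℝ) (u : ℕ → Fin n → ℝ)
    (x : ℕ → Ω → Fin n → ℝ)
    (hx0 : x 0 = x₀)
    (hxrec : ∀ s : ℕ, ∀ ω, x (s + 1) ω = u (s + 1) + A *ᵥ x s ω + β *ᵥ η (s + 1) ω)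
    (M N : ℕ → Matrix (Fin n) (Fin n) ℝ) :
    covMatrix (fun ω => ∑ l ∈ Finset.Icc 1 t, M l *ᵥ x (l - 1) ω)
        (fun ω => ∑ k ∈ Finset.Icc 1 (t - h), N k *ᵥ η k ω) =
      ∑ k ∈ Finset.Icc 1 (t - h),
        (∑ l ∈ Finset.Icc (k + 1) t, M l * A ^ (l - 1 - k) * β) * (N k)ᵀ :=
  cov_state_noise_sums_general x₀ η hx₀L2 hηL2 hηcov hindep A β u x hx0 hxrec M N
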